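/- In a strongly connected directed graph whose vertex set is B^N and where each vertex has at least one outgoing edge, for any vertex x, any target vertex y, and any finite prefix of edge labels, the prefix can be extended to a finite label word whose path starting at x ends at y. Consequently the set of points of X whose orbit under G_g visits any prescribed state is dense in X when 𝒢_g is strongly connected. -/
import Mathlib

def hamB {N : ℕ} (x y : Fin N → Bool) : ℕ :=
  (Finset.univ.filter fun i => x i ≠ y i).card

noncomputable def dE {N : ℕ} (x y : Fin N → Bool) : ℝ := hamB x y

noncomputable def dM {N : ℕ} (m m' : ℕ → Fin N → Bool) : ℝ :=
  (9 / (N : ℝ)) * ∑' k : ℕ, (hamB (m k) (m' k) : ℝ) / 10 ^ (k + 1)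

noncomputable def dX {N : ℕ} (p q : (Fin N → Bool) × (ℕ → Fin N → Bool)) : ℝ :=
  dE p.1 q.1 + dM p.2 q.2

def Gmap {N : ℕ} (g : (Fin N → Bool) → (Fin N → Bool) → (Fin N → Bool))
    (p : (Fin N → Bool) × (ℕ → Fin N → Bool)) : (Fin N → Bool) × (ℕ → Fin N → Bool) :=
  (g (p.2 0) p.1, fun k => p.2 (k + 1))

def pathEnd {N : ℕ} (g : (Fin N → Bool) → (Fin N → Bool) → (Fin N → Bool))
    (x : Fin N → Bool) (L : List (Fin N → Bool)) : Fin N → Bool :=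
  L.foldl (fun v m => g m v) x

lemma hamB_self {N : ℕ} (x : Fin N → Bool) : hamB x x = 0 := by
  simp [hamB]

lemma hamB_le {N : ℕ} (x y : Fin N → Bool) : (hamB x y : ℝ) ≤ N := by
  have := Finset.card_filter_le (Finset.univ : Finset (Fin N)) (fun i => x i ≠ y i)
  simp only [Finset.card_univ, Fintype.card_fin] at this
  exact_mod_cast this

lemma geom_summable : Summable (fun k : ℕ => ((1:ℝ)/10) ^ k) :=
  summable_geometric_of_lt_one (by norm_num) (by norm_num)

lemma summable_aux {N : ℕ} (m m' : ℕ → Fin N → Bool) :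
    Summable (fun k : ℕ => (hamB (m k) (m' k) : ℝ) / 10 ^ (k + 1)) := by
  refine Summable.of_nonneg_of_le (fun k => by positivity) (fun k => ?_)
    ((geom_summable.comp_injective (add_left_injective 1)).mul_left (N : ℝ))
  rw [div_eq_mul_inv, ← inv_pow, ← one_div]
  exact mul_le_mul_of_nonneg_right (hamB_le _ _) (by positivity)

lemma Gmap_iter {N : ℕ} (g : (Fin N → Bool) → (Fin N → Bool) → (Fin N → Bool)) :
    ∀ (n : ℕ) (x : Fin N → Bool) (m : ℕ → Fin N → Bool),
      (Gmap g)^[n] (x, m) = (pathEnd g x ((List.range n).map m), fun k => m (k + n)) := by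
  intro n
  induction n with
  | zero => intro x m; simp [pathEnd]
  | succ n ih =>
    intro x m
    rw [Function.iterate_succ_apply]
    show (Gmap g)^[n] (g (m 0) x, fun k => m (k + 1)) = _
    rw [ih, List.range_succ_eq_map]
    simp only [List.map_cons, List.map_map]
    refine Prod.ext ?_ ?_
    · rfl
    · funext k; simp [Nat.add_comm, Nat.add_assoc, Nat.add_left_comm]

/-- in a strongly connected graph `𝒢_g` in which every vertex has an
outgoing edge, any prefix of labels from `x` extends to a label word whose path ends at
`y`; consequently, the set of points of `X` whose orbit under `G_g` visits any
prescribed state is dense in `(X, d)`. -/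
theorem prefix_extension_and_density (N : ℕ) (hN : 1 ≤ N)
    (g : (Fin N → Bool) → (Fin N → Bool) → (Fin N → Bool))
    (hsc : ∀ x y : Fin N → Bool, ∃ L : List (Fin N → Bool), pathEnd g x L = y)
    (hout : ∀ x : Fin N → Bool, ∃ (m : Fin N → Bool) (y : Fin N → Bool), g m x = y) :
    (∀ x y : Fin N → Bool, ∀ P : List (Fin N → Bool),
       ∃ W : List (Fin N → Bool), P <+: W ∧ pathEnd g x W = y) ∧
    (∀ y : Fin N → Bool, ∀ p : (Fin N → Bool) × (ℕ → Fin N → Bool), ∀ ε > (0 : ℝ),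
       ∃ q, dX p q < ε ∧ ∃ n : ℕ, ((Gmap g)^[n] q).1 = y) := by
  have hext : ∀ x y : Fin N → Bool, ∀ P : List (Fin N → Bool),
      ∃ W : List (Fin N → Bool), P <+: W ∧ pathEnd g x W = y := by
    intro x y P
    obtain ⟨L, hL⟩ := hsc (pathEnd g x P) y
    exact ⟨P ++ L, List.prefix_append _ _, by simp [pathEnd, List.foldl_append] at hL ⊢; exact hL⟩
  refine ⟨hext, ?_⟩
  intro y p ε hε
  obtain ⟨n, hn⟩ := exists_pow_lt_of_lt_one hε (show (1/10 : ℝ) < 1 by norm_num)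
  set P : List (Fin N → Bool) := (List.range n).map p.2 with hP
  obtain ⟨W, hPW, hWend⟩ := hext p.1 y P
  have hnW : n ≤ W.length := by
    have := hPW.length_le; simpa [hP] using this
  set m' : ℕ → Fin N → Bool := fun k => W.getD k (p.2 k) with hm'
  have hagree : ∀ k < n, m' k = p.2 k := by
    intro k hk
    obtain ⟨T, hT⟩ := hPW
    have hkP : k < P.length := by simpa [hP]
    rw [hm', ← hT]
    simp only
    rw [List.getD_append _ _ _ _ hkP, List.getD_eq_getElem _ _ hkP]
    simp [hP]
  have hWmap : (List.range W.length).map m' = W := by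
    apply List.ext_getElem
    · simp
    · intro i h1 h2
      simp only [List.getElem_map, List.getElem_range]
      rw [hm']
      exact List.getD_eq_getElem _ _ h2
  refine ⟨(p.1, m'), ?_, W.length, ?_⟩
  · -- distance bound
    have hsum := summable_aux p.2 m'
    set f : ℕ → ℝ := fun k => (hamB (p.2 k) (m' k) : ℝ) / 10 ^ (k + 1) with hf
    have hsplit := (Summable.sum_add_tsum_nat_add n hsum).symm
    have hzero : ∑ k ∈ Finset.range n, f k = 0 := by
      apply Finset.sum_eq_zero
      intro k hk
      rw [Finset.mem_range] at hk
      simp [hf, hagree k hk, hamB_self]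
    have htail : ∑' k : ℕ, f (k + n) ≤ ∑' k : ℕ, (N : ℝ) * (1/10) ^ (k + n + 1) := by
      apply Summable.tsum_le_tsum
      · intro k
        rw [hf]
        simp only
        rw [div_eq_mul_inv, ← inv_pow, ← one_div]
        exact mul_le_mul_of_nonneg_right (hamB_le _ _) (by positivity)
      · exact hsum.comp_injective (add_left_injective n)
      · apply Summable.mul_left
        apply geom_summable.comp_injective
        intro a b hab
        simpa using hab
    have hclosed : ∑' k : ℕ, (N : ℝ) * (1/10) ^ (k + n + 1) = (N : ℝ) * (1/10) ^ n / 9 := by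
      have : ∀ k : ℕ, (N : ℝ) * (1/10) ^ (k + n + 1)
          = ((N : ℝ) * (1/10) ^ (n + 1)) * (1/10) ^ k := by
        intro k; rw [pow_add, pow_add]; ring
      rw [tsum_congr this, tsum_mul_left, tsum_geometric_of_lt_one (by norm_num) (by norm_num)]
      field_simp
      ring
    have hS : ∑' k, f k ≤ (N : ℝ) * (1/10) ^ n / 9 := by
      rw [hsplit, hzero, zero_add]
      exact htail.trans_eq hclosed
    have hNpos : (0 : ℝ) < N := by exact_mod_cast hN
    have hdM : dM p.2 m' ≤ (1/10) ^ n := by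
      rw [dM]
      calc (9 / (N : ℝ)) * ∑' k, f k ≤ (9 / (N : ℝ)) * ((N : ℝ) * (1/10) ^ n / 9) := by
            exact mul_le_mul_of_nonneg_left hS (by positivity)
        _ = (1/10) ^ n := by field_simp
    have : dX p (p.1, m') = dM p.2 m' := by
      simp [dX, dE, hamB_self]
    rw [this]
    exact lt_of_le_of_lt hdM hn
  · rw [show (p.1, m') = (p.1, m') from rfl, Gmap_iter, hWmap]
    simpa using hWend
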